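/- Let M≤⁻ᵗ be the category defined exactly like M≤ save that it lacks the primitive arrow terms t_{x,y,z} and all the specific equations of M≤ (i.e., (rtδ), (rtσ) and (tb)). Then the functor G : M≤⁻ᵗ → Br (defined on M≤⁻ᵗ by the same clauses as on M≤) is faithful: for arrow terms f, g : A ⊢ B of M≤⁻ᵗ, if Gf = Gg in Br then f = g in M≤⁻ᵗ. -/

import Mathlib

/-! Formalization of categories of proofs for linear equality (Dosen-Petric),
with the generality functor G into the category Br of Brauerian diagrams,
represented here by the matching relation on occurrences of variables. -/

namespace DP

/-- Formulae: atomic formulae `x R y` (for the binary predicate in question),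
the constant true, and conjunctions. -/
inductive Fm (V : Type) : Type
  | rel : V → V → Fm V
  | top : Fm V
  | and : Fm V → Fm V → Fm V

/-- Occurrences of variables in a formula: `false`/`true` are respectively the
left-hand and right-hand occurrences of variables in an atomic formula. -/
def Occ {V : Type} : Fm V → Type
  | .rel _ _ => Bool
  | .top => Empty
  | .and A B => Occ A ⊕ Occ B

/-- The matching relation on `source ⊕ target` induced by a relabelling function
from target occurrences to source occurrences. -/
def relabel {α β : Type} (φ : β → α) : α ⊕ β → α ⊕ β → Prop :=
  fun u v => (∃ o, u = Sum.inl (φ o) ∧ v = Sum.inr o) ∨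
             (∃ o, u = Sum.inr o ∧ v = Sum.inl (φ o))

/-- The matching relation induced by a relabelling function from source occurrences
to target occurrences. -/
def corelabel {α β : Type} (ψ : α → β) : α ⊕ β → α ⊕ β → Prop :=
  fun u v => (∃ o, u = Sum.inl o ∧ v = Sum.inr (ψ o)) ∨
             (∃ o, u = Sum.inr (ψ o) ∧ v = Sum.inl o)

/-- Horizontal (side-by-side) composition of Brauerian diagrams. -/
def tensRel {α β γ δ : Type}
    (p : α ⊕ β → α ⊕ β → Prop) (q : γ ⊕ δ → γ ⊕ δ → Prop) :
    (α ⊕ γ) ⊕ (β ⊕ δ) → (α ⊕ γ) ⊕ (β ⊕ δ) → Prop :=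
  fun u v =>
    (∃ x y, p x y ∧ u = Sum.map Sum.inl Sum.inl x ∧ v = Sum.map Sum.inl Sum.inl y) ∨
    (∃ x y, q x y ∧ u = Sum.map Sum.inr Sum.inr x ∧ v = Sum.map Sum.inr Sum.inr y)

/-- Vertical composition of Brauerian diagrams: two endpoints are matched in the
composite when they are joined by a path of edges through the middle points. -/
def compRel {α β γ : Type}
    (p : α ⊕ β → α ⊕ β → Prop) (q : β ⊕ γ → β ⊕ γ → Prop) :
    α ⊕ γ → α ⊕ γ → Prop :=
  fun u v => u ≠ v ∧
    Relation.ReflTransGen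
      (fun s t : α ⊕ β ⊕ γ =>
        (∃ x y, p x y ∧ s = Sum.map (fun a => a) Sum.inl x ∧
                        t = Sum.map (fun a => a) Sum.inl y) ∨
        (∃ x y, q x y ∧ s = Sum.inr x ∧ t = Sum.inr y))
      (Sum.map (fun a => a) Sum.inr u) (Sum.map (fun a => a) Sum.inr v)

/-- Arrow terms. -/
inductive Ar (V : Type) : Fm V → Fm V → Type
  | id (A : Fm V) : Ar V A A
  | comp {A B C : Fm V} : Ar V B C → Ar V A B → Ar V A C
  | tens {A B C D : Fm V} : Ar V A B → Ar V C D → Ar V (.and A C) (.and B D)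
  | bto (A B C : Fm V) : Ar V (.and A (.and B C)) (.and (.and A B) C)
  | bfrom (A B C : Fm V) : Ar V (.and (.and A B) C) (.and A (.and B C))
  | dto (A : Fm V) : Ar V (.and A .top) A
  | dfrom (A : Fm V) : Ar V A (.and A .top)
  | sto (A : Fm V) : Ar V (.and .top A) A
  | sfrom (A : Fm V) : Ar V A (.and .top A)
  | r (x : V) : Ar V .top (.rel x x)

/-- The Brauerian diagram (matching relation on occurrences of variables in
source and target) associated with an arrow term: the image under the functor G. -/
def GRel {V : Type} : ∀ {A B : Fm V}, Ar V A B → (Occ A ⊕ Occ B → Occ A ⊕ Occ B → Prop)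
  | _, _, .id _ => relabel (fun o => o)
  | _, _, .comp g f => compRel (GRel f) (GRel g)
  | _, _, .tens f g => tensRel (GRel f) (GRel g)
  | _, _, .bto _ _ _ => relabel (fun o =>
      match o with
      | Sum.inl (Sum.inl a) => Sum.inl a
      | Sum.inl (Sum.inr b) => Sum.inr (Sum.inl b)
      | Sum.inr c => Sum.inr (Sum.inr c))
  | _, _, .bfrom _ _ _ => relabel (fun o =>
      match o with
      | Sum.inl a => Sum.inl (Sum.inl a)
      | Sum.inr (Sum.inl b) => Sum.inl (Sum.inr b)
      | Sum.inr (Sum.inr c) => Sum.inr c)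
  | _, _, .dto _ => relabel Sum.inl
  | _, _, .dfrom _ => corelabel Sum.inl
  | _, _, .sto _ => relabel Sum.inr
  | _, _, .sfrom _ => corelabel Sum.inr
  | _, _, .r _ => fun u v =>
      (u = Sum.inr false ∧ v = Sum.inr true) ∨ (u = Sum.inr true ∧ v = Sum.inr false)

/-- Equality of arrow terms: the smallest congruence generated by the defining
equations of the category. -/
inductive Eqv {V : Type} : ∀ {A B : Fm V}, Ar V A B → Ar V A B → Prop
  | refl {A B : Fm V} (f : Ar V A B) : Eqv f f
  | symm {A B : Fm V} {f g : Ar V A B} : Eqv f g → Eqv g f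
  | trans {A B : Fm V} {f g h : Ar V A B} : Eqv f g → Eqv g h → Eqv f h
  | congr_comp {A B C : Fm V} {g g' : Ar V B C} {f f' : Ar V A B} :
      Eqv g g' → Eqv f f' → Eqv (g.comp f) (g'.comp f')
  | congr_tens {A B C D : Fm V} {f f' : Ar V A B} {g g' : Ar V C D} :
      Eqv f f' → Eqv g g' → Eqv (f.tens g) (f'.tens g')
  | id_comp {A B : Fm V} (f : Ar V A B) : Eqv ((Ar.id B).comp f) f
  | comp_id {A B : Fm V} (f : Ar V A B) : Eqv (f.comp (Ar.id A)) f
  | comp_assoc {A B C D : Fm V} (h : Ar V C D) (g : Ar V B C) (f : Ar V A B) :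
      Eqv ((h.comp g).comp f) (h.comp (g.comp f))
  | tens_id (A B : Fm V) : Eqv ((Ar.id A).tens (Ar.id B)) (Ar.id (.and A B))
  | tens_comp {A1 B1 C1 A2 B2 C2 : Fm V} (g1 : Ar V B1 C1) (f1 : Ar V A1 B1)
      (g2 : Ar V B2 C2) (f2 : Ar V A2 B2) :
      Eqv ((g1.comp f1).tens (g2.comp f2)) ((g1.tens g2).comp (f1.tens f2))
  | nat_b {A B C D E F : Fm V} (f : Ar V A D) (g : Ar V B E) (h : Ar V C F) :
      Eqv (((f.tens g).tens h).comp (Ar.bto A B C)) ((Ar.bto D E F).comp (f.tens (g.tens h)))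
  | nat_d {A D : Fm V} (f : Ar V A D) :
      Eqv (f.comp (Ar.dto A)) ((Ar.dto D).comp (f.tens (Ar.id .top)))
  | nat_s {A D : Fm V} (f : Ar V A D) :
      Eqv (f.comp (Ar.sto A)) ((Ar.sto D).comp ((Ar.id .top).tens f))
  | bb1 (A B C : Fm V) : Eqv ((Ar.bfrom A B C).comp (Ar.bto A B C)) (Ar.id (.and A (.and B C)))
  | bb2 (A B C : Fm V) : Eqv ((Ar.bto A B C).comp (Ar.bfrom A B C)) (Ar.id (.and (.and A B) C))
  | dd1 (A : Fm V) : Eqv ((Ar.dfrom A).comp (Ar.dto A)) (Ar.id (.and A .top))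
  | dd2 (A : Fm V) : Eqv ((Ar.dto A).comp (Ar.dfrom A)) (Ar.id A)
  | ss1 (A : Fm V) : Eqv ((Ar.sfrom A).comp (Ar.sto A)) (Ar.id (.and .top A))
  | ss2 (A : Fm V) : Eqv ((Ar.sto A).comp (Ar.sfrom A)) (Ar.id A)
  | pent (A B C D : Fm V) :
      Eqv ((Ar.bto (.and A B) C D).comp (Ar.bto A B (.and C D)))
        (((Ar.bto A B C).tens (Ar.id D)).comp
          ((Ar.bto A (.and B C) D).comp ((Ar.id A).tens (Ar.bto B C D))))
  | bds (A C : Fm V) :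
      Eqv (Ar.bto A .top C) (((Ar.dfrom A).tens (Ar.id C)).comp ((Ar.id A).tens (Ar.sto C)))

/-! Every arrow term is equal in M≤⁻ᵗ to a normal form `c_B⁻¹ ∘ w ∘ c_A`, where `c_A` and `c_B`
are structural isomorphisms rebracketing source and target into right-nested conjunctions of
their atoms, and `w` is an insertion word: it keeps the atoms of the source in order and inserts
new atoms `x ≤ x` produced by `r_x`. Normal forms are closed under composition and `∧` because
any two parallel structural arrows are equal, which is Mac Lane's coherence theorem (the free
monoidal category is thin).

Every diagram in the image of G is the graph of a `Match`: each source occurrence is joined to a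
target occurrence, and the remaining target occurrences are joined among themselves by caps.
Equal arrows have equal matches, structural isomorphisms have bijective matches, and the match of
an insertion word determines the word. Hence two arrows with the same diagram have the same
normal form. -/

variable {V : Type}

instance Ar.setoid (V : Type) (A B : Fm V) : Setoid (Ar V A B) :=
  ⟨Eqv, ⟨Eqv.refl, Eqv.symm, Eqv.trans⟩⟩

/-- The arrows `A ⊢ B` of the category M≤⁻ᵗ. -/
abbrev Mor (V : Type) (A B : Fm V) := Quotient (Ar.setoid V A B)

namespace Mor

def comp {A B C : Fm V} : Mor V B C → Mor V A B → Mor V A C :=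
  Quotient.map₂ Ar.comp (fun _ _ h _ _ h' => Eqv.congr_comp h h')

def tens {A B C D : Fm V} : Mor V A B → Mor V C D → Mor V (A.and C) (B.and D) :=
  Quotient.map₂ Ar.tens (fun _ _ h _ _ h' => Eqv.congr_tens h h')

infixr:80 " ⬝ " => Mor.comp
infixr:85 " ⧆ " => Mor.tens

@[simp] theorem mk_comp {A B C : Fm V} (g : Ar V B C) (f : Ar V A B) :
    (⟦g.comp f⟧ : Mor V A C) = ⟦g⟧ ⬝ ⟦f⟧ := rfl

@[simp] theorem mk_tens {A B C D : Fm V} (f : Ar V A B) (g : Ar V C D) :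
    (⟦f.tens g⟧ : Mor V _ _) = ⟦f⟧ ⧆ ⟦g⟧ := rfl

@[simp] theorem id_comp {A B : Fm V} (f : Mor V A B) : ⟦Ar.id B⟧ ⬝ f = f := by
  induction f using Quotient.ind; exact Quotient.sound (Eqv.id_comp _)

@[simp] theorem comp_id {A B : Fm V} (f : Mor V A B) : f ⬝ ⟦Ar.id A⟧ = f := by
  induction f using Quotient.ind; exact Quotient.sound (Eqv.comp_id _)

theorem assoc {A B C D : Fm V} (h : Mor V C D) (g : Mor V B C) (f : Mor V A B) :
    (h ⬝ g) ⬝ f = h ⬝ g ⬝ f := by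
  induction h using Quotient.ind; induction g using Quotient.ind
  induction f using Quotient.ind; exact Quotient.sound (Eqv.comp_assoc _ _ _)

@[simp] theorem id_tens_id (A B : Fm V) :
    (⟦Ar.id A⟧ : Mor V A A) ⧆ ⟦Ar.id B⟧ = ⟦Ar.id (A.and B)⟧ :=
  Quotient.sound (Eqv.tens_id A B)

theorem comp_tens_comp {A₁ B₁ C₁ A₂ B₂ C₂ : Fm V} (g₁ : Mor V B₁ C₁) (f₁ : Mor V A₁ B₁)
    (g₂ : Mor V B₂ C₂) (f₂ : Mor V A₂ B₂) :
    (g₁ ⬝ f₁) ⧆ (g₂ ⬝ f₂) = (g₁ ⧆ g₂) ⬝ (f₁ ⧆ f₂) := by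
  induction g₁ using Quotient.ind; induction f₁ using Quotient.ind
  induction g₂ using Quotient.ind; induction f₂ using Quotient.ind
  exact Quotient.sound (Eqv.tens_comp _ _ _ _)

def IsInverse {A B : Fm V} (f : Mor V A B) (g : Mor V B A) : Prop :=
  g ⬝ f = ⟦Ar.id A⟧ ∧ f ⬝ g = ⟦Ar.id B⟧

namespace IsInverse

theorem unique {A B : Fm V} {f : Mor V A B} {g g' : Mor V B A}
    (h : IsInverse f g) (h' : IsInverse f g') : g = g' :=
  calc g = g ⬝ f ⬝ g' := by rw [h'.2, comp_id]
    _ = g' := by rw [← assoc, h.1, id_comp]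

theorem symm {A B : Fm V} {f : Mor V A B} {g : Mor V B A} (h : IsInverse f g) :
    IsInverse g f :=
  ⟨h.2, h.1⟩

theorem comp {A B C : Fm V} {f : Mor V A B} {f' : Mor V B A} {g : Mor V B C}
    {g' : Mor V C B} (hf : IsInverse f f') (hg : IsInverse g g') :
    IsInverse (g ⬝ f) (f' ⬝ g') :=
  ⟨by rw [assoc, ← assoc g', hg.1, id_comp, hf.1],
   by rw [assoc, ← assoc f, hf.2, id_comp, hg.2]⟩

theorem tens {A B C D : Fm V} {f : Mor V A B} {f' : Mor V B A} {g : Mor V C D}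
    {g' : Mor V D C} (hf : IsInverse f f') (hg : IsInverse g g') :
    IsInverse (f ⧆ g) (f' ⧆ g') :=
  ⟨by rw [← comp_tens_comp, hf.1, hg.1, id_tens_id],
   by rw [← comp_tens_comp, hf.2, hg.2, id_tens_id]⟩

theorem id (A : Fm V) : IsInverse (⟦Ar.id A⟧ : Mor V A A) ⟦Ar.id A⟧ :=
  ⟨id_comp _, id_comp _⟩

theorem bto (A B C : Fm V) : IsInverse (⟦Ar.bto A B C⟧ : Mor V _ _) ⟦Ar.bfrom A B C⟧ :=
  ⟨Quotient.sound (Eqv.bb1 A B C), Quotient.sound (Eqv.bb2 A B C)⟩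

theorem dto (A : Fm V) : IsInverse (⟦Ar.dto A⟧ : Mor V _ _) ⟦Ar.dfrom A⟧ :=
  ⟨Quotient.sound (Eqv.dd1 A), Quotient.sound (Eqv.dd2 A)⟩

theorem sto (A : Fm V) : IsInverse (⟦Ar.sto A⟧ : Mor V _ _) ⟦Ar.sfrom A⟧ :=
  ⟨Quotient.sound (Eqv.ss1 A), Quotient.sound (Eqv.ss2 A)⟩

theorem comp_eq_comp {A A' B B' : Fm V} {u : Mor V A A'} {u' : Mor V A' A}
    {v : Mor V B B'} {v' : Mor V B' B} {x : Mor V A' B'} {y : Mor V A B}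
    (hu : IsInverse u u') (hv : IsInverse v v') (h : x ⬝ u = v ⬝ y) : y ⬝ u' = v' ⬝ x :=
  calc y ⬝ u' = (v' ⬝ v ⬝ y) ⬝ u' := by rw [← assoc, hv.1, id_comp]
    _ = (v' ⬝ x ⬝ u) ⬝ u' := by rw [h]
    _ = v' ⬝ x := by rw [assoc, assoc, hu.2, comp_id]

end IsInverse

theorem bto_natural {A B C D E F : Fm V} (f : Mor V A D) (g : Mor V B E) (h : Mor V C F) :
    ((f ⧆ g) ⧆ h) ⬝ ⟦Ar.bto A B C⟧ = ⟦Ar.bto D E F⟧ ⬝ (f ⧆ g ⧆ h) := by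
  induction f using Quotient.ind; induction g using Quotient.ind
  induction h using Quotient.ind; exact Quotient.sound (Eqv.nat_b _ _ _)

theorem dto_natural {A D : Fm V} (f : Mor V A D) :
    f ⬝ ⟦Ar.dto A⟧ = ⟦Ar.dto D⟧ ⬝ (f ⧆ ⟦Ar.id .top⟧) := by
  induction f using Quotient.ind; exact Quotient.sound (Eqv.nat_d _)

theorem sto_natural {A D : Fm V} (f : Mor V A D) :
    f ⬝ ⟦Ar.sto A⟧ = ⟦Ar.sto D⟧ ⬝ (⟦Ar.id .top⟧ ⧆ f) := by
  induction f using Quotient.ind; exact Quotient.sound (Eqv.nat_s _)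

theorem bfrom_natural {A B C D E F : Fm V} (f : Mor V A D) (g : Mor V B E) (h : Mor V C F) :
    (f ⧆ g ⧆ h) ⬝ ⟦Ar.bfrom A B C⟧ = ⟦Ar.bfrom D E F⟧ ⬝ ((f ⧆ g) ⧆ h) :=
  (IsInverse.bto _ _ _).comp_eq_comp (.bto _ _ _) (bto_natural f g h)

theorem dfrom_natural {A D : Fm V} (f : Mor V A D) :
    (f ⧆ ⟦Ar.id .top⟧) ⬝ ⟦Ar.dfrom A⟧ = ⟦Ar.dfrom D⟧ ⬝ f :=
  (IsInverse.dto _).comp_eq_comp (.dto _) (dto_natural f)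

theorem sfrom_natural {A D : Fm V} (f : Mor V A D) :
    (⟦Ar.id .top⟧ ⧆ f) ⬝ ⟦Ar.sfrom A⟧ = ⟦Ar.sfrom D⟧ ⬝ f :=
  (IsInverse.sto _).comp_eq_comp (.sto _) (sto_natural f)

theorem tens_comp {A B C D E : Fm V} (f : Mor V A B) (g : Mor V D E) (h : Mor V C D) :
    f ⧆ (g ⬝ h) = (f ⧆ g) ⬝ (⟦Ar.id A⟧ ⧆ h) := by
  rw [← comp_tens_comp, comp_id]

theorem comp_tens {A B C D E : Fm V} (g : Mor V B C) (f : Mor V A B) (h : Mor V D E) :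
    (g ⬝ f) ⧆ h = (g ⧆ h) ⬝ (f ⧆ ⟦Ar.id D⟧) := by
  rw [← comp_tens_comp, comp_id]

theorem bfrom_pentagon (A B C D : Fm V) :
    (⟦Ar.id A⟧ ⧆ ⟦Ar.bfrom B C D⟧) ⬝ ⟦Ar.bfrom A (B.and C) D⟧ ⬝ (⟦Ar.bfrom A B C⟧ ⧆ ⟦Ar.id D⟧) =
      (⟦Ar.bfrom A B (C.and D)⟧ : Mor V _ _) ⬝ ⟦Ar.bfrom (A.and B) C D⟧ := by
  have hinv := (((IsInverse.id A).tens (.bto B C D)).comp (.bto A (B.and C) D)).comp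
    ((IsInverse.bto A B C).tens (.id D))
  have hpent : (⟦Ar.bto A B C⟧ ⧆ ⟦Ar.id D⟧) ⬝ ⟦Ar.bto A (B.and C) D⟧ ⬝
      (⟦Ar.id A⟧ ⧆ ⟦Ar.bto B C D⟧) =
        (⟦Ar.bto (A.and B) C D⟧ : Mor V _ _) ⬝ ⟦Ar.bto A B (C.and D)⟧ :=
    (Quotient.sound (Eqv.pent A B C D)).symm
  rw [hpent, assoc] at hinv
  exact hinv.unique ((IsInverse.bto A B (C.and D)).comp (.bto (A.and B) C D))

theorem bfrom_triangle (A B : Fm V) :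
    (⟦Ar.id A⟧ ⧆ ⟦Ar.sto B⟧) ⬝ ⟦Ar.bfrom A .top B⟧ = (⟦Ar.dto A⟧ ⧆ ⟦Ar.id B⟧ : Mor V _ _) := by
  have hinv := ((IsInverse.id A).tens (.sto B)).comp ((IsInverse.dto A).symm.tens (.id B))
  rw [← mk_tens, ← mk_tens, ← mk_comp, ← Quotient.sound (Eqv.bds A B)] at hinv
  rw [(IsInverse.bto A .top B).unique hinv, ← assoc, ← comp_tens_comp, ← comp_tens_comp,
    (IsInverse.sto B).2, id_comp, id_comp, comp_id]

end Mor

inductive CohTerm (V : Type) : Fm V → Fm V → Type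
  | id (A : Fm V) : CohTerm V A A
  | comp {A B C : Fm V} : CohTerm V B C → CohTerm V A B → CohTerm V A C
  | tens {A B C D : Fm V} : CohTerm V A B → CohTerm V C D → CohTerm V (.and A C) (.and B D)
  | bto (A B C : Fm V) : CohTerm V (.and A (.and B C)) (.and (.and A B) C)
  | bfrom (A B C : Fm V) : CohTerm V (.and (.and A B) C) (.and A (.and B C))
  | dto (A : Fm V) : CohTerm V (.and A .top) A
  | dfrom (A : Fm V) : CohTerm V A (.and A .top)
  | sto (A : Fm V) : CohTerm V (.and .top A) A
  | sfrom (A : Fm V) : CohTerm V A (.and .top A)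

namespace CohTerm

def toAr : ∀ {A B : Fm V}, CohTerm V A B → Ar V A B
  | _, _, .id A => .id A
  | _, _, .comp g f => g.toAr.comp f.toAr
  | _, _, .tens f g => f.toAr.tens g.toAr
  | _, _, .bto A B C => .bto A B C
  | _, _, .bfrom A B C => .bfrom A B C
  | _, _, .dto A => .dto A
  | _, _, .dfrom A => .dfrom A
  | _, _, .sto A => .sto A
  | _, _, .sfrom A => .sfrom A

def inv : ∀ {A B : Fm V}, CohTerm V A B → CohTerm V B A
  | _, _, .id A => .id A
  | _, _, .comp g f => f.inv.comp g.inv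
  | _, _, .tens f g => f.inv.tens g.inv
  | _, _, .bto A B C => .bfrom A B C
  | _, _, .bfrom A B C => .bto A B C
  | _, _, .dto A => .dfrom A
  | _, _, .dfrom A => .dto A
  | _, _, .sto A => .sfrom A
  | _, _, .sfrom A => .sto A

theorem isInverse_inv {A B : Fm V} (c : CohTerm V A B) :
    Mor.IsInverse ⟦c.toAr⟧ ⟦c.inv.toAr⟧ := by
  induction c with
  | id A => exact .id A
  | comp g f ihg ihf => exact ihf.comp ihg
  | tens f g ihf ihg => exact ihf.tens ihg
  | bto A B C => exact .bto A B C
  | bfrom A B C => exact (Mor.IsInverse.bto A B C).symm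
  | dto A => exact .dto A
  | dfrom A => exact (Mor.IsInverse.dto A).symm
  | sto A => exact .sto A
  | sfrom A => exact (Mor.IsInverse.sto A).symm

end CohTerm

section FreeMonoidal

open CategoryTheory FreeMonoidalCategory

def Fm.toFree : Fm V → FreeMonoidalCategory (V × V)
  | .rel x y => .of (x, y)
  | .top => .unit
  | .and A B => .tensor A.toFree B.toFree

-- Reducible so that rewriting with `Mor.mk_tens` sees `Fm.ofFree (.tensor X Y)` as a conjunction.
@[reducible] def Fm.ofFree : FreeMonoidalCategory (V × V) → Fm V
  | .of p => .rel p.1 p.2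
  | .unit => .top
  | .tensor X Y => .and (Fm.ofFree X) (Fm.ofFree Y)

theorem Fm.ofFree_toFree (A : Fm V) : Fm.ofFree A.toFree = A := by
  induction A with
  | rel x y => rfl
  | top => rfl
  | and A B ihA ihB => exact congrArg₂ Fm.and ihA ihB

def CohTerm.toFree : ∀ {A B : Fm V}, CohTerm V A B → FreeMonoidalCategory.Hom A.toFree B.toFree
  | _, _, .id _ => .id _
  | _, _, .comp g f => .comp f.toFree g.toFree
  | _, _, .tens f g => .tensor f.toFree g.toFree
  | _, _, .bto _ _ _ => .α_inv _ _ _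
  | _, _, .bfrom _ _ _ => .α_hom _ _ _
  | _, _, .dto _ => .ρ_hom _
  | _, _, .dfrom _ => .ρ_inv _
  | _, _, .sto _ => .l_hom _
  | _, _, .sfrom _ => .l_inv _

def Ar.ofFree : ∀ {X Y : FreeMonoidalCategory (V × V)}, FreeMonoidalCategory.Hom X Y →
    Ar V (Fm.ofFree X) (Fm.ofFree Y)
  | _, _, .id X => .id _
  | _, _, .α_hom _ _ _ => .bfrom _ _ _
  | _, _, .α_inv _ _ _ => .bto _ _ _
  | _, _, .l_hom _ => .sto _
  | _, _, .l_inv _ => .sfrom _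
  | _, _, .ρ_hom _ => .dto _
  | _, _, .ρ_inv _ => .dfrom _
  | _, _, .comp f g => (Ar.ofFree g).comp (Ar.ofFree f)
  | _, _, .whiskerLeft X f => (Ar.id (Fm.ofFree X)).tens (Ar.ofFree f)
  | _, _, .whiskerRight f Y => (Ar.ofFree f).tens (Ar.id (Fm.ofFree Y))
  | _, _, .tensor f g => (Ar.ofFree f).tens (Ar.ofFree g)

-- `Fm.ofFree A.toFree` is only propositionally equal to `A`, hence the heterogeneous equality.
theorem CohTerm.heq_ofFree_toFree {A B : Fm V} (c : CohTerm V A B) :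
    HEq (Ar.ofFree c.toFree) c.toAr := by
  induction c <;> simp only [CohTerm.toFree, Ar.ofFree, CohTerm.toAr] <;> congr <;>
    exact Fm.ofFree_toFree _

theorem Ar.mk_ofFree_eq_of_homEquiv {X Y : FreeMonoidalCategory (V × V)}
    {p q : FreeMonoidalCategory.Hom X Y} (h : HomEquiv p q) :
    (⟦Ar.ofFree p⟧ : Mor V _ _) = ⟦Ar.ofFree q⟧ := by
  induction h with
  | refl => rfl
  | symm _ _ _ ih => exact ih.symm
  | trans _ _ ih ih' => exact ih.trans ih'
  | comp _ _ ihf ihg => simp only [Ar.ofFree, Mor.mk_comp, ihf, ihg]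
  | whiskerLeft _ _ _ _ ih => simp only [Ar.ofFree, Mor.mk_tens, ih]
  | whiskerRight _ _ _ _ ih => simp only [Ar.ofFree, Mor.mk_tens, ih]
  | tensor _ _ ihf ihg => simp only [Ar.ofFree, Mor.mk_tens, ihf, ihg]
  | tensorHom_def =>
      simp only [Ar.ofFree, Mor.mk_tens, Mor.mk_comp, ← Mor.comp_tens_comp, Mor.id_comp,
        Mor.comp_id]
  | comp_id => simp only [Ar.ofFree, Mor.mk_comp, Mor.id_comp]
  | id_comp => simp only [Ar.ofFree, Mor.mk_comp, Mor.comp_id]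
  | assoc => simp only [Ar.ofFree, Mor.mk_comp, Mor.assoc]
  | id_tensorHom_id => simp only [Ar.ofFree, Mor.mk_tens, Mor.id_tens_id]
  | tensorHom_comp_tensorHom => simp only [Ar.ofFree, Mor.mk_tens, Mor.mk_comp, Mor.comp_tens_comp]
  | whiskerLeft_id => simp only [Ar.ofFree, Mor.mk_tens, Mor.id_tens_id]
  | id_whiskerRight => simp only [Ar.ofFree, Mor.mk_tens, Mor.id_tens_id]
  | α_hom_inv => exact (Mor.IsInverse.bto _ _ _).2
  | α_inv_hom => exact (Mor.IsInverse.bto _ _ _).1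
  | ρ_hom_inv => exact (Mor.IsInverse.dto _).1
  | ρ_inv_hom => exact (Mor.IsInverse.dto _).2
  | l_hom_inv => exact (Mor.IsInverse.sto _).1
  | l_inv_hom => exact (Mor.IsInverse.sto _).2
  | associator_naturality =>
      simp only [Ar.ofFree, Mor.mk_comp, Mor.mk_tens]; exact (Mor.bfrom_natural _ _ _).symm
  | ρ_naturality =>
      simp only [Ar.ofFree, Mor.mk_comp, Mor.mk_tens]; exact (Mor.dto_natural _).symm
  | l_naturality =>
      simp only [Ar.ofFree, Mor.mk_comp, Mor.mk_tens]; exact (Mor.sto_natural _).symm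
  | pentagon =>
      simp only [Ar.ofFree, Mor.mk_comp, Mor.mk_tens, Mor.assoc]; exact Mor.bfrom_pentagon _ _ _ _
  | triangle => exact Mor.bfrom_triangle _ _

theorem Mor.mk_eq_mk_of_heq {A A' B B' : Fm V} (hA : A = A') (hB : B = B')
    {f g : Ar V A B} {f' g' : Ar V A' B'} (hf : HEq f f') (hg : HEq g g')
    (h : (⟦f⟧ : Mor V A B) = ⟦g⟧) : (⟦f'⟧ : Mor V A' B') = ⟦g'⟧ := by
  subst hA hB; cases hf; cases hg; exact h

theorem CohTerm.mk_toAr_eq {A B : Fm V} (c c' : CohTerm V A B) :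
    (⟦c.toAr⟧ : Mor V A B) = ⟦c'.toAr⟧ :=
  Mor.mk_eq_mk_of_heq (Fm.ofFree_toFree A) (Fm.ofFree_toFree B) c.heq_ofFree_toFree
    c'.heq_ofFree_toFree <| Ar.mk_ofFree_eq_of_homEquiv <| Quotient.exact <|
      Subsingleton.elim (α := A.toFree ⟶ B.toFree) ⟦c.toFree⟧ ⟦c'.toFree⟧

theorem Mor.bfrom_comp_sfrom_tens (A B : Fm V) :
    ⟦Ar.bfrom .top A B⟧ ⬝ (⟦Ar.sfrom A⟧ ⧆ ⟦Ar.id B⟧) = (⟦Ar.sfrom (A.and B)⟧ : Mor V _ _) :=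
  CohTerm.mk_toAr_eq (.comp (.bfrom .top A B) (.tens (.sfrom A) (.id B))) (.sfrom _)

end FreeMonoidal

/-- A Brauerian diagram from `α` to `β` in which every point of `α` is joined to a point of `β`,
as is the case for every diagram in the image of `G`. A point `a` of the source is joined to
`up a`; a point `b` of the target is joined to the point `link b` of the source or target. -/
structure Match (α β : Type) where
  up : α → β
  link : β → α ⊕ β
  link_up : ∀ a, link (up a) = .inl a
  up_of_link : ∀ {b a}, link b = .inl a → up a = b
  link_of_link : ∀ {b b'}, link b = .inr b' → b' ≠ b ∧ link b' = .inr b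

namespace Match

variable {α β γ δ : Type}

@[ext] theorem ext {m m' : Match α β} (hup : m.up = m'.up) (hlink : m.link = m'.link) :
    m = m' := by
  cases m; cases m'; simp_all

theorem up_injective (m : Match α β) : Function.Injective m.up := fun a a' h =>
  Sum.inl_injective (by rw [← m.link_up, h, m.link_up])

def diagram (m : Match α β) : α ⊕ β → α ⊕ β → Prop := fun u v =>
  (∃ a, u = .inl a ∧ v = .inr (m.up a)) ∨
  (∃ a, v = .inl a ∧ u = .inr (m.up a)) ∨
  (∃ b b', m.link b = .inr b' ∧ u = .inr b ∧ v = .inr b')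

theorem diagram_injective : Function.Injective (diagram (α := α) (β := β)) := by
  intro m m' h
  have hup : ∀ a, m.up a = m'.up a := fun a => by
    have hd : m'.diagram (.inl a) (.inr (m.up a)) := h ▸ Or.inl ⟨a, rfl, rfl⟩
    rcases hd with ⟨_, ⟨⟩, hv⟩ | ⟨_, _, ⟨⟩⟩ | ⟨_, _, _, ⟨⟩, _⟩
    exact Sum.inr_injective hv
  refine Match.ext (funext hup) (funext fun b => ?_)
  rcases hb : m.link b with a | b'
  · rw [← m.up_of_link hb, hup, m'.link_up]
  · have hd : m'.diagram (.inr b) (.inr b') := h ▸ Or.inr (Or.inr ⟨b, b', hb, rfl, rfl⟩)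
    rcases hd with ⟨_, ⟨⟩, _⟩ | ⟨_, ⟨⟩, _⟩ | ⟨_, _, hc, ⟨⟩, ⟨⟩⟩
    exact hc.symm

def ofEquiv (e : α ≃ β) : Match α β where
  up := e
  link b := .inl (e.symm b)
  link_up a := by rw [e.symm_apply_apply]
  up_of_link h := by cases h; exact e.apply_symm_apply _
  link_of_link h := by cases h

theorem relabel_eq_diagram_ofEquiv (e : α ≃ β) {φ : β → α} (hφ : ∀ b, φ b = e.symm b) :
    relabel φ = (ofEquiv e).diagram := by
  funext u v
  apply propext
  constructor
  · rintro (⟨b, rfl, rfl⟩ | ⟨b, rfl, rfl⟩)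
    · exact Or.inl ⟨φ b, rfl, by simp [ofEquiv, hφ]⟩
    · exact Or.inr (Or.inl ⟨φ b, rfl, by simp [ofEquiv, hφ]⟩)
  · rintro (⟨a, rfl, rfl⟩ | ⟨a, rfl, rfl⟩ | ⟨b, b', ⟨⟩, -⟩)
    · exact Or.inl ⟨e a, by simp [hφ], rfl⟩
    · exact Or.inr ⟨e a, rfl, by simp [hφ]⟩

theorem corelabel_eq_diagram_ofEquiv (e : α ≃ β) {ψ : α → β} (hψ : ∀ a, ψ a = e a) :
    corelabel ψ = (ofEquiv e).diagram := by
  funext u v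
  apply propext
  constructor
  · rintro (⟨a, rfl, rfl⟩ | ⟨a, rfl, rfl⟩)
    · exact Or.inl ⟨a, rfl, by simp [ofEquiv, hψ]⟩
    · exact Or.inr (Or.inl ⟨a, rfl, by simp [ofEquiv, hψ]⟩)
  · rintro (⟨a, rfl, rfl⟩ | ⟨a, rfl, rfl⟩ | ⟨b, b', ⟨⟩, -⟩)
    · exact Or.inl ⟨a, rfl, by simp [ofEquiv, hψ]⟩
    · exact Or.inr ⟨a, by simp [ofEquiv, hψ], rfl⟩

def compLink (m : Match α β) (m' : Match β γ) (c : γ) : α ⊕ γ :=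
  match m'.link c with
  | .inl b => match m.link b with
    | .inl a => .inl a
    | .inr b' => .inr (m'.up b')
  | .inr c' => .inr c'

theorem compLink_of_inl_inl {m : Match α β} {m' : Match β γ} {c : γ} {b : β} {a : α}
    (hc : m'.link c = .inl b) (hb : m.link b = .inl a) : compLink m m' c = .inl a := by
  simp [compLink, hc, hb]

theorem compLink_of_inl_inr {m : Match α β} {m' : Match β γ} {c : γ} {b b' : β}
    (hc : m'.link c = .inl b) (hb : m.link b = .inr b') :
    compLink m m' c = .inr (m'.up b') := by
  simp [compLink, hc, hb]

theorem compLink_of_inr {m : Match α β} {m' : Match β γ} {c c' : γ}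
    (hc : m'.link c = .inr c') : compLink m m' c = .inr c' := by
  simp [compLink, hc]

def comp (m : Match α β) (m' : Match β γ) : Match α γ where
  up a := m'.up (m.up a)
  link := compLink m m'
  link_up a := compLink_of_inl_inl (m'.link_up _) (m.link_up _)
  up_of_link {c a} h := by
    rcases hc : m'.link c with b | c'
    · rcases hb : m.link b with a' | b'
      · rw [compLink_of_inl_inl hc hb, Sum.inl.injEq] at h
        rw [← h, m.up_of_link hb, m'.up_of_link hc]
      · rw [compLink_of_inl_inr hc hb] at h; cases h
    · rw [compLink_of_inr hc] at h; cases h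
  link_of_link {c c'} h := by
    rcases hc : m'.link c with b | c₀
    · rcases hb : m.link b with a' | b'
      · rw [compLink_of_inl_inl hc hb] at h; cases h
      · rw [compLink_of_inl_inr hc hb] at h
        cases h
        obtain ⟨hne, hb'⟩ := m.link_of_link hb
        have hcb : m'.up b = c := m'.up_of_link hc
        refine ⟨fun h => hne (m'.up_injective (h.trans hcb.symm)), ?_⟩
        rw [compLink_of_inl_inr (m'.link_up _) hb', hcb]
    · rw [compLink_of_inr hc] at h
      cases h
      obtain ⟨hne, hc'⟩ := m'.link_of_link hc
      exact ⟨hne, compLink_of_inr hc'⟩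

def tens (m : Match α β) (m' : Match γ δ) : Match (α ⊕ γ) (β ⊕ δ) where
  up := Sum.map m.up m'.up
  link := Sum.elim (fun b => (m.link b).map .inl .inl) (fun d => (m'.link d).map .inr .inr)
  link_up a := by rcases a with a | c <;> simp [m.link_up, m'.link_up]
  up_of_link {b a} h := by
    rcases b with b | d
    · rcases hb : m.link b with a' | b' <;> simp only [Sum.elim_inl, hb, Sum.map_inl,
        Sum.map_inr, reduceCtorEq, Sum.inl.injEq] at h
      subst h; simp [m.up_of_link hb]
    · rcases hd : m'.link d with c' | d' <;> simp only [Sum.elim_inr, hd, Sum.map_inl,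
        Sum.map_inr, reduceCtorEq, Sum.inl.injEq] at h
      subst h; simp [m'.up_of_link hd]
  link_of_link {b b'} h := by
    rcases b with b | d
    · rcases hb : m.link b with a' | b₀ <;> simp only [Sum.elim_inl, hb, Sum.map_inl,
        Sum.map_inr, reduceCtorEq, Sum.inr.injEq] at h
      obtain ⟨hne, hb₀⟩ := m.link_of_link hb
      subst h; simp [hne, hb₀]
    · rcases hd : m'.link d with c' | d₀ <;> simp only [Sum.elim_inr, hd, Sum.map_inl,
        Sum.map_inr, reduceCtorEq, Sum.inr.injEq] at h
      obtain ⟨hne, hd₀⟩ := m'.link_of_link hd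
      subst h; simp [hne, hd₀]

def cap : Match Empty Bool where
  up := Empty.elim
  link b := .inr (!b)
  link_up a := a.elim
  up_of_link {_ a} _ := a.elim
  link_of_link h := by cases h; exact ⟨Bool.not_ne_self _, by simp⟩

end Match

def Ar.toMatch : ∀ {A B : Fm V}, Ar V A B → Match (Occ A) (Occ B)
  | _, _, .id _ => .ofEquiv (Equiv.refl _)
  | _, _, .comp g f => f.toMatch.comp g.toMatch
  | _, _, .tens f g => f.toMatch.tens g.toMatch
  | _, _, .bto _ _ _ => .ofEquiv (Equiv.sumAssoc _ _ _).symm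
  | _, _, .bfrom _ _ _ => .ofEquiv (Equiv.sumAssoc _ _ _)
  | _, _, .dto A => .ofEquiv (Equiv.sumEmpty (Occ A) Empty)
  | _, _, .dfrom A => .ofEquiv (Equiv.sumEmpty (Occ A) Empty).symm
  | _, _, .sto A => .ofEquiv (Equiv.emptySum Empty (Occ A))
  | _, _, .sfrom A => .ofEquiv (Equiv.emptySum Empty (Occ A)).symm
  | _, _, .r _ => Match.cap

namespace Match

variable {α β γ δ : Type}

theorem tensRel_diagram (m : Match α β) (m' : Match γ δ) :
    tensRel m.diagram m'.diagram = (m.tens m').diagram := by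
  funext u v
  apply propext
  constructor
  · rintro (⟨x, y, hxy, rfl, rfl⟩ | ⟨x, y, hxy, rfl, rfl⟩)
    · rcases hxy with ⟨a, rfl, rfl⟩ | ⟨a, rfl, rfl⟩ | ⟨b, b', hb, rfl, rfl⟩
      · exact Or.inl ⟨.inl a, rfl, rfl⟩
      · exact Or.inr (Or.inl ⟨.inl a, rfl, rfl⟩)
      · exact Or.inr (Or.inr ⟨.inl b, .inl b', by simp [tens, hb], rfl, rfl⟩)
    · rcases hxy with ⟨a, rfl, rfl⟩ | ⟨a, rfl, rfl⟩ | ⟨b, b', hb, rfl, rfl⟩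
      · exact Or.inl ⟨.inr a, rfl, rfl⟩
      · exact Or.inr (Or.inl ⟨.inr a, rfl, rfl⟩)
      · exact Or.inr (Or.inr ⟨.inr b, .inr b', by simp [tens, hb], rfl, rfl⟩)
  · rintro (⟨a | c, rfl, rfl⟩ | ⟨a | c, rfl, rfl⟩ | ⟨b | d, b', hb, rfl, rfl⟩)
    · exact Or.inl ⟨.inl a, .inr (m.up a), Or.inl ⟨a, rfl, rfl⟩, rfl, rfl⟩
    · exact Or.inr ⟨.inl c, .inr (m'.up c), Or.inl ⟨c, rfl, rfl⟩, rfl, rfl⟩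
    · exact Or.inl ⟨.inr (m.up a), .inl a, Or.inr (Or.inl ⟨a, rfl, rfl⟩), rfl, rfl⟩
    · exact Or.inr ⟨.inr (m'.up c), .inl c, Or.inr (Or.inl ⟨c, rfl, rfl⟩), rfl, rfl⟩
    · rcases hb' : m.link b with a₀ | b₀ <;> simp only [tens, Sum.elim_inl, hb', Sum.map_inl,
        Sum.map_inr, reduceCtorEq] at hb
      rcases b' with b' | d' <;> simp only [Sum.inr.injEq, Sum.inl.injEq, reduceCtorEq] at hb
      subst hb
      exact Or.inl ⟨.inr b, .inr b₀, Or.inr (Or.inr ⟨b, b₀, hb', rfl, rfl⟩), rfl, rfl⟩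
    · rcases hd' : m'.link d with c₀ | d₀ <;> simp only [tens, Sum.elim_inr, hd', Sum.map_inl,
        Sum.map_inr, reduceCtorEq] at hb
      rcases b' with b' | d' <;> simp only [Sum.inr.injEq, reduceCtorEq] at hb
      subst hb
      exact Or.inr ⟨.inr d, .inr d₀, Or.inr (Or.inr ⟨d, d₀, hd', rfl, rfl⟩), rfl, rfl⟩

section Comp

variable (m : Match α β) (m' : Match β γ)

/-- The outer endpoints (in `α ⊕ γ`) of the component of a vertex of the graph obtained by
stacking `m'` on top of `m`; this is constant along edges. -/
def outerEnds : α ⊕ (β ⊕ γ) → α ⊕ γ → Prop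
  | .inl a, w => w = .inl a ∨ w = .inr (m'.up (m.up a))
  | .inr (.inl b), w =>
      match m.link b with
      | .inl a => w = .inl a ∨ w = .inr (m'.up b)
      | .inr b' => w = .inr (m'.up b) ∨ w = .inr (m'.up b')
  | .inr (.inr c), w =>
      match m'.link c with
      | .inl b =>
        (match m.link b with
         | .inl a => w = .inl a ∨ w = .inr (m'.up b)
         | .inr b' => w = .inr (m'.up b) ∨ w = .inr (m'.up b'))
      | .inr c' => w = .inr c ∨ w = .inr c'

def stackEdge : α ⊕ (β ⊕ γ) → α ⊕ (β ⊕ γ) → Prop := fun s t =>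
  (∃ x y, m.diagram x y ∧ s = Sum.map (fun a => a) Sum.inl x ∧
    t = Sum.map (fun a => a) Sum.inl y) ∨
  (∃ x y, m'.diagram x y ∧ s = .inr x ∧ t = .inr y)

theorem outerEnds_eq_of_stackEdge {u v : α ⊕ (β ⊕ γ)} (h : stackEdge m m' u v) :
    outerEnds m m' u = outerEnds m m' v := by
  funext w
  apply propext
  rcases h with ⟨x, y, hxy, rfl, rfl⟩ | ⟨x, y, hxy, rfl, rfl⟩
  · rcases hxy with ⟨a, rfl, rfl⟩ | ⟨a, rfl, rfl⟩ | ⟨b, b', hb, rfl, rfl⟩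
    · simp only [Sum.map_inl, Sum.map_inr, outerEnds, m.link_up]
    · simp only [Sum.map_inl, Sum.map_inr, outerEnds, m.link_up]
    · simp only [Sum.map_inr, outerEnds, hb, (m.link_of_link hb).2]
      exact or_comm
  · rcases hxy with ⟨b, rfl, rfl⟩ | ⟨b, rfl, rfl⟩ | ⟨c, c', hc, rfl, rfl⟩
    · simp only [outerEnds, m'.link_up]
    · simp only [outerEnds, m'.link_up]
    · simp only [outerEnds, hc, (m'.link_of_link hc).2]
      exact or_comm

theorem mem_outerEnds_self (w : α ⊕ γ) : outerEnds m m' (Sum.map (fun a => a) Sum.inr w) w := by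
  rcases w with a | c
  · exact Or.inl rfl
  · show outerEnds m m' (.inr (.inr c)) (.inr c)
    rcases hc : m'.link c with b | c'
    · rcases hb : m.link b with a | b' <;> simp [outerEnds, hc, hb, m'.up_of_link hc]
    · simp [outerEnds, hc]

theorem diagram_comp_of_mem_outerEnds {u v : α ⊕ γ} (hne : u ≠ v)
    (he : outerEnds m m' (Sum.map (fun a => a) Sum.inr u) v) : (m.comp m').diagram u v := by
  rcases u with a | c
  · rcases he with rfl | rfl
    · exact absurd rfl hne
    · exact Or.inl ⟨a, rfl, rfl⟩
  · replace he : outerEnds m m' (.inr (.inr c)) v := he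
    rcases hc : m'.link c with b | c'
    · have hbc : m'.up b = c := m'.up_of_link hc
      rcases hb : m.link b with a | b' <;> simp only [outerEnds, hc, hb, hbc] at he <;>
        rcases he with rfl | rfl
      · exact Or.inr (Or.inl ⟨a, rfl, by simp [comp, m.up_of_link hb, hbc]⟩)
      · exact absurd rfl hne
      · exact absurd rfl hne
      · exact Or.inr (Or.inr ⟨c, m'.up b', compLink_of_inl_inr hc hb, rfl, rfl⟩)
    · simp only [outerEnds, hc] at he
      rcases he with rfl | rfl
      · exact absurd rfl hne
      · exact Or.inr (Or.inr ⟨c, c', compLink_of_inr hc, rfl, rfl⟩)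

theorem compRel_diagram : compRel m.diagram m'.diagram = (m.comp m').diagram := by
  funext u v
  apply propext
  constructor
  · rintro ⟨hne, hpath⟩
    have hends : outerEnds m m' _ = outerEnds m m' _ :=
      Relation.ReflTransGen.rec (motive := fun y _ => outerEnds m m' _ = outerEnds m m' y) rfl
        (fun _ hstep ih => ih.trans (outerEnds_eq_of_stackEdge m m' hstep)) hpath
    exact diagram_comp_of_mem_outerEnds m m' hne (hends ▸ mem_outerEnds_self m m' v)
  · rintro (⟨a, rfl, rfl⟩ | ⟨a, rfl, rfl⟩ | ⟨c, c', hcc', rfl, rfl⟩)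
    · refine ⟨by simp, .head (Or.inl ⟨.inl a, .inr (m.up a), Or.inl ⟨a, rfl, rfl⟩, rfl, rfl⟩)
        (.single (Or.inr ⟨.inl (m.up a), .inr (m'.up (m.up a)), Or.inl ⟨m.up a, rfl, rfl⟩,
          rfl, rfl⟩))⟩
    · refine ⟨by simp, .head (Or.inr ⟨.inr (m'.up (m.up a)), .inl (m.up a),
        Or.inr (Or.inl ⟨m.up a, rfl, rfl⟩), rfl, rfl⟩)
        (.single (Or.inl ⟨.inr (m.up a), .inl a, Or.inr (Or.inl ⟨a, rfl, rfl⟩), rfl, rfl⟩))⟩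
    · refine ⟨fun h => ((m.comp m').link_of_link hcc').1 (Sum.inr_injective h).symm, ?_⟩
      change compLink m m' c = .inr c' at hcc'
      rcases hc : m'.link c with b | c₀
      · rcases hb : m.link b with a | b'
        · rw [compLink_of_inl_inl hc hb] at hcc'; cases hcc'
        · rw [compLink_of_inl_inr hc hb] at hcc'
          cases hcc'
          obtain rfl : m'.up b = c := m'.up_of_link hc
          exact .head (Or.inr ⟨.inr (m'.up b), .inl b, Or.inr (Or.inl ⟨b, rfl, rfl⟩), rfl, rfl⟩)
            (.head (Or.inl ⟨.inr b, .inr b', Or.inr (Or.inr ⟨b, b', hb, rfl, rfl⟩), rfl, rfl⟩)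
            (.single (Or.inr ⟨.inl b', .inr (m'.up b'), Or.inl ⟨b', rfl, rfl⟩, rfl, rfl⟩)))
      · rw [compLink_of_inr hc] at hcc'
        cases hcc'
        exact .single (Or.inr ⟨.inr c, .inr c', Or.inr (Or.inr ⟨c, c', hc, rfl, rfl⟩), rfl, rfl⟩)

end Comp

end Match

theorem GRel_eq_diagram_toMatch : ∀ {A B : Fm V} (f : Ar V A B), GRel f = f.toMatch.diagram
  | _, _, .id _ => Match.relabel_eq_diagram_ofEquiv _ fun _ => rfl
  | _, _, .comp g f => by
      rw [GRel, GRel_eq_diagram_toMatch f, GRel_eq_diagram_toMatch g]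
      exact Match.compRel_diagram _ _
  | _, _, .tens f g => by
      rw [GRel, GRel_eq_diagram_toMatch f, GRel_eq_diagram_toMatch g]
      exact Match.tensRel_diagram _ _
  | _, _, .bto _ _ _ => Match.relabel_eq_diagram_ofEquiv _ <| by rintro ((a | b) | c) <;> rfl
  | _, _, .bfrom _ _ _ => Match.relabel_eq_diagram_ofEquiv _ <| by rintro (a | b | c) <;> rfl
  | _, _, .dto _ => Match.relabel_eq_diagram_ofEquiv _ fun _ => rfl
  | _, _, .dfrom _ => Match.corelabel_eq_diagram_ofEquiv _ fun _ => rfl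
  | _, _, .sto _ => Match.relabel_eq_diagram_ofEquiv _ fun _ => rfl
  | _, _, .sfrom _ => Match.corelabel_eq_diagram_ofEquiv _ fun _ => rfl
  | _, _, .r x => by
      funext u v
      apply propext
      constructor
      · rintro (⟨rfl, rfl⟩ | ⟨rfl, rfl⟩)
        · exact Or.inr (Or.inr ⟨false, true, rfl, rfl, rfl⟩)
        · exact Or.inr (Or.inr ⟨true, false, rfl, rfl, rfl⟩)
      · rintro (⟨⟨⟩, -⟩ | ⟨⟨⟩, -⟩ | ⟨b, b', hbb', rfl, rfl⟩)
        cases hbb'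
        cases b
        exacts [Or.inl ⟨rfl, rfl⟩, Or.inr ⟨rfl, rfl⟩]

namespace Match

variable {α β γ δ ε ζ : Type}

@[simp] theorem comp_up (m : Match α β) (m' : Match β γ) (a : α) :
    (m.comp m').up a = m'.up (m.up a) := rfl

@[simp] theorem tens_up (m : Match α β) (m' : Match γ δ) :
    (m.tens m').up = Sum.map m.up m'.up := rfl

@[simp] theorem tens_link_inl (m : Match α β) (m' : Match γ δ) (b : β) :
    (m.tens m').link (.inl b) = (m.link b).map .inl .inl := rfl

@[simp] theorem tens_link_inr (m : Match α β) (m' : Match γ δ) (d : δ) :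
    (m.tens m').link (.inr d) = (m'.link d).map .inr .inr := rfl

@[simp] theorem ofEquiv_up (e : α ≃ β) : (ofEquiv e).up = e := rfl

@[simp] theorem ofEquiv_link (e : α ≃ β) (b : β) : (ofEquiv e).link b = .inl (e.symm b) := rfl

@[simp] theorem ofEquiv_comp_link (e : α ≃ β) (m : Match β γ) (c : γ) :
    ((ofEquiv e).comp m).link c = (m.link c).map e.symm id := by
  rcases h : m.link c with b | c' <;> simp [comp, compLink, h]

@[simp] theorem comp_ofEquiv_link (m : Match α β) (e : β ≃ γ) (c : γ) :
    (m.comp (ofEquiv e)).link c = (m.link (e.symm c)).map id e := by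
  rcases h : m.link (e.symm c) with a | b <;> simp [comp, compLink, h]

theorem comp_assoc (m₁ : Match α β) (m₂ : Match β γ) (m₃ : Match γ δ) :
    (m₁.comp m₂).comp m₃ = m₁.comp (m₂.comp m₃) := by
  refine Match.ext rfl (funext fun d => ?_)
  rcases h₃ : m₃.link d with c | d'
  · rcases h₂ : m₂.link c with b | c'
    · rcases h₁ : m₁.link b with a | b' <;> simp [comp, compLink, h₃, h₂, h₁]
    · simp [comp, compLink, h₃, h₂]
  · simp [comp, compLink, h₃]

theorem ofEquiv_refl_comp (m : Match α β) : (ofEquiv (Equiv.refl α)).comp m = m := by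
  ext <;> simp

theorem comp_ofEquiv_refl (m : Match α β) : m.comp (ofEquiv (Equiv.refl β)) = m := by
  ext <;> simp

theorem ofEquiv_comp_ofEquiv (e : α ≃ β) (e' : β ≃ γ) :
    (ofEquiv e).comp (ofEquiv e') = ofEquiv (e.trans e') := by
  ext <;> simp

theorem ofEquiv_tens_ofEquiv (e : α ≃ β) (e' : γ ≃ δ) :
    (ofEquiv e).tens (ofEquiv e') = ofEquiv (e.sumCongr e') := by
  ext x
  · rcases x with a | c <;> rfl
  · rcases x with b | d <;> rfl

theorem tens_comp_tens (f₁ : Match α β) (g₁ : Match β γ) (f₂ : Match δ ε) (g₂ : Match ε ζ) :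
    (f₁.comp g₁).tens (f₂.comp g₂) = (f₁.tens f₂).comp (g₁.tens g₂) := by
  refine Match.ext (by ext (a | a) <;> rfl) (funext fun c => ?_)
  rcases c with c | c
  · rcases h₂ : g₁.link c with b | c'
    · rcases h₁ : f₁.link b with a | b' <;> simp [comp, compLink, h₂, h₁]
    · simp [comp, compLink, h₂]
  · rcases h₂ : g₂.link c with b | c'
    · rcases h₁ : f₂.link b with a | b' <;> simp [comp, compLink, h₂, h₁]
    · simp [comp, compLink, h₂]

theorem sumAssoc_natural (m₁ : Match α δ) (m₂ : Match β ε) (m₃ : Match γ ζ) :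
    (ofEquiv (Equiv.sumAssoc α β γ).symm).comp ((m₁.tens m₂).tens m₃) =
      (m₁.tens (m₂.tens m₃)).comp (ofEquiv (Equiv.sumAssoc δ ε ζ).symm) := by
  ext x
  · rcases x with a | b | c <;> rfl
  · rcases x with (d | e) | f
    · rcases h : m₁.link d <;> simp [h]
    · rcases h : m₂.link e <;> simp [h]
    · rcases h : m₃.link f <;> simp [h]

theorem sumEmpty_natural (m : Match α β) :
    (ofEquiv (Equiv.sumEmpty α Empty)).comp m =
      (m.tens (ofEquiv (Equiv.refl Empty))).comp (ofEquiv (Equiv.sumEmpty β Empty)) := by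
  ext x
  · rcases x with a | e; exacts [rfl, e.elim]
  · rcases h : m.link x <;> simp [h]

theorem emptySum_natural (m : Match α β) :
    (ofEquiv (Equiv.emptySum Empty α)).comp m =
      ((ofEquiv (Equiv.refl Empty)).tens m).comp (ofEquiv (Equiv.emptySum Empty β)) := by
  ext x
  · rcases x with e | a; exacts [e.elim, rfl]
  · rcases h : m.link x <;> simp [h]

theorem ofEquiv_comp_injective (e : α ≃ β) :
    Function.Injective ((ofEquiv e).comp : Match β γ → Match α γ) := by
  have hcancel : ∀ n : Match β γ, (ofEquiv e.symm).comp ((ofEquiv e).comp n) = n := fun n => by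
    rw [← comp_assoc, ofEquiv_comp_ofEquiv, Equiv.symm_trans_self, ofEquiv_refl_comp]
  exact Function.LeftInverse.injective hcancel

theorem comp_ofEquiv_injective (e : β ≃ γ) :
    Function.Injective (fun m : Match α β => m.comp (ofEquiv e)) := by
  have hcancel : ∀ n : Match α β, (n.comp (ofEquiv e)).comp (ofEquiv e.symm) = n := fun n => by
    rw [comp_assoc, ofEquiv_comp_ofEquiv, Equiv.self_trans_symm, comp_ofEquiv_refl]
  exact Function.LeftInverse.injective (g := fun n : Match α γ => n.comp (ofEquiv e.symm)) hcancel

theorem tens_right_injective (m₀ : Match α β) :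
    Function.Injective (m₀.tens : Match γ δ → Match (α ⊕ γ) (β ⊕ δ)) := by
  intro m m' h
  ext x
  · exact Sum.inr_injective (congrFun (congrArg up h) (.inr x))
  · exact (Sum.map_injective.2 ⟨Sum.inr_injective, Sum.inr_injective⟩)
      (congrFun (congrArg link h) (.inr x))

end Match

theorem Eqv.toMatch_eq {A B : Fm V} {f g : Ar V A B} (h : Eqv f g) : f.toMatch = g.toMatch := by
  induction h with
  | refl => rfl
  | symm _ ih => exact ih.symm
  | trans _ _ ih ih' => exact ih.trans ih'
  | congr_comp _ _ ihg ihf => exact congrArg₂ Match.comp ihf ihg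
  | congr_tens _ _ ihf ihg => exact congrArg₂ Match.tens ihf ihg
  | id_comp => exact Match.comp_ofEquiv_refl _
  | comp_id => exact Match.ofEquiv_refl_comp _
  | comp_assoc => exact (Match.comp_assoc _ _ _).symm
  | tens_comp => exact Match.tens_comp_tens _ _ _ _
  | nat_b => exact Match.sumAssoc_natural _ _ _
  | nat_d => exact Match.sumEmpty_natural _
  | nat_s => exact Match.emptySum_natural _
  -- The remaining equations relate bijective relabellings; they are checked pointwise.
  | _ =>
      refine Match.ext (funext fun x => ?_) (funext fun x => ?_) <;>
        (repeat' rcases x with x | x) <;> rfl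

-- These two are reducible so that rewriting sees `ofAtoms (p :: l)` as a conjunction and
-- `(A.and B).atoms` as `A.atoms ++ B.atoms`.
@[reducible] def Fm.atoms : Fm V → List (V × V)
  | .rel x y => [(x, y)]
  | .top => []
  | .and A B => A.atoms ++ B.atoms

@[reducible] def ofAtoms : List (V × V) → Fm V
  | [] => .top
  | p :: l => .and (.rel p.1 p.2) (ofAtoms l)

/-- An insertion word from the atoms `l₁` to the atoms `l₂`: each atom of `l₂` is either the next
atom of `l₁` (`keep`) or a new atom `x ≤ x` (`new`). -/
inductive Word (V : Type) : List (V × V) → List (V × V) → Type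
  | nil : Word V [] []
  | keep (p : V × V) {l₁ l₂ : List (V × V)} : Word V l₁ l₂ → Word V (p :: l₁) (p :: l₂)
  | new (x : V) {l₁ l₂ : List (V × V)} : Word V l₁ l₂ → Word V l₁ ((x, x) :: l₂)

namespace Word

def toAr : ∀ {l₁ l₂ : List (V × V)}, Word V l₁ l₂ → Ar V (ofAtoms l₁) (ofAtoms l₂)
  | _, _, .nil => .id .top
  | _, _, .keep p w => (Ar.id (.rel p.1 p.2)).tens w.toAr
  | _, _, .new x w => ((Ar.r x).tens w.toAr).comp (Ar.sfrom _)

def refl : ∀ (l : List (V × V)), Word V l l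
  | [] => .nil
  | p :: l => .keep p (refl l)

def comp : ∀ {l₁ l₂ l₃ : List (V × V)}, Word V l₂ l₃ → Word V l₁ l₂ → Word V l₁ l₃
  | _, _, _, .new x w₂, w₁ => .new x (comp w₂ w₁)
  | _, _, _, .keep p w₂, .keep _ w₁ => .keep p (comp w₂ w₁)
  | _, _, _, .keep _ w₂, .new x w₁ => .new x (comp w₂ w₁)
  | _, _, _, .nil, w₁ => w₁

def append : ∀ {l₁ l₂ l₃ l₄ : List (V × V)},
    Word V l₁ l₂ → Word V l₃ l₄ → Word V (l₁ ++ l₃) (l₂ ++ l₄)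
  | _, _, _, _, .nil, w => w
  | _, _, _, _, .keep p w, w' => .keep p (append w w')
  | _, _, _, _, .new x w, w' => .new x (append w w')

end Word

section NormalForm

open Mor CohTerm

theorem Word.mk_toAr_refl (l : List (V × V)) :
    (⟦(Word.refl l).toAr⟧ : Mor V _ _) = ⟦Ar.id (ofAtoms l)⟧ := by
  induction l with
  | nil => rfl
  | cons p l ih => exact (congrArg (_ ⧆ ·) ih).trans (id_tens_id _ _)

theorem Word.mk_toAr_comp : ∀ {l₁ l₂ l₃ : List (V × V)} (w₂ : Word V l₂ l₃) (w₁ : Word V l₁ l₂),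
    (⟦w₂.toAr⟧ : Mor V _ _) ⬝ ⟦w₁.toAr⟧ = ⟦(w₂.comp w₁).toAr⟧
  | _, _, _, .new x w₂, w₁ => by
      simp only [Word.toAr, Word.comp, mk_comp, mk_tens]
      rw [assoc, ← sfrom_natural, ← assoc, ← comp_tens_comp, comp_id, Word.mk_toAr_comp w₂ w₁]
  | _, _, _, .keep p w₂, .keep _ w₁ => by
      simp only [Word.toAr, Word.comp, mk_tens]
      rw [← comp_tens_comp, id_comp, Word.mk_toAr_comp w₂ w₁]
  | _, _, _, .keep _ w₂, .new x w₁ => by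
      simp only [Word.toAr, Word.comp, mk_comp, mk_tens]
      rw [← assoc, ← comp_tens_comp, id_comp, Word.mk_toAr_comp w₂ w₁]
  | _, _, _, .nil, w₁ => id_comp _

def CohTerm.merge : ∀ (l₁ l₂ : List (V × V)),
    CohTerm V ((ofAtoms l₁).and (ofAtoms l₂)) (ofAtoms (l₁ ++ l₂))
  | [], _ => .sto _
  | p :: l₁, l₂ => .comp (.tens (.id (.rel p.1 p.2)) (merge l₁ l₂)) (.bfrom _ _ _)

def CohTerm.flatten : ∀ (A : Fm V), CohTerm V A (ofAtoms A.atoms)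
  | .rel _ _ => .dfrom _
  | .top => .id _
  | .and A B => .comp (merge A.atoms B.atoms) (.tens (flatten A) (flatten B))

theorem CohTerm.merge_natural : ∀ {l₁ l₂ l₃ l₄ : List (V × V)} (w : Word V l₁ l₂)
    (w' : Word V l₃ l₄),
    (⟦(merge l₂ l₄).toAr⟧ : Mor V _ _) ⬝ (⟦w.toAr⟧ ⧆ ⟦w'.toAr⟧) =
      ⟦(w.append w').toAr⟧ ⬝ ⟦(merge l₁ l₃).toAr⟧
  | _, _, _, _, .nil, w' => (sto_natural _).symm
  | _, _, l₃, l₄, .keep (l₁ := l₁) (l₂ := l₂) p w, w' => by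
      show ((⟦Ar.id _⟧ ⧆ ⟦(merge l₂ l₄).toAr⟧) ⬝ ⟦Ar.bfrom _ _ _⟧) ⬝
          ((⟦Ar.id _⟧ ⧆ ⟦w.toAr⟧) ⧆ ⟦w'.toAr⟧) =
        (⟦Ar.id (.rel p.1 p.2)⟧ ⧆ ⟦(w.append w').toAr⟧) ⬝
          (⟦Ar.id _⟧ ⧆ ⟦(merge l₁ l₃).toAr⟧) ⬝ ⟦Ar.bfrom _ _ _⟧
      rw [assoc, ← bfrom_natural, ← assoc, ← comp_tens_comp, merge_natural w w', comp_id,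
        ← id_comp ⟦Ar.id (.rel p.1 p.2)⟧, comp_tens_comp, id_comp, assoc]
  | _, _, l₃, l₄, .new (l₁ := l₁) (l₂ := l₂) x w, w' => by
      show ((⟦Ar.id _⟧ ⧆ ⟦(merge l₂ l₄).toAr⟧) ⬝ ⟦Ar.bfrom _ _ _⟧) ⬝
          (((⟦Ar.r x⟧ ⧆ ⟦w.toAr⟧) ⬝ ⟦Ar.sfrom _⟧) ⧆ ⟦w'.toAr⟧) =
        ((⟦Ar.r x⟧ ⧆ ⟦(w.append w').toAr⟧) ⬝ ⟦Ar.sfrom _⟧) ⬝ ⟦(merge l₁ l₃).toAr⟧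
      simp only [assoc]
      rw [comp_tens, ← assoc (⟦Ar.bfrom _ _ _⟧), ← bfrom_natural]
      simp only [assoc]
      rw [← assoc (⟦Ar.id _⟧ ⧆ _), ← comp_tens_comp, id_comp, merge_natural w w',
        bfrom_comp_sfrom_tens, ← sfrom_natural, tens_comp, assoc]

def normalForm {A B : Fm V} (w : Word V A.atoms B.atoms) : Ar V A B :=
  (flatten B).inv.toAr.comp (w.toAr.comp (flatten A).toAr)

theorem CohTerm.atoms_eq {A B : Fm V} (c : CohTerm V A B) : A.atoms = B.atoms := by
  induction c with
  | comp _ _ ihg ihf => exact ihf.trans ihg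
  | tens _ _ ihf ihg => exact congrArg₂ (· ++ ·) ihf ihg
  | _ => simp

theorem Word.exists_mk_toAr_eq_of_eq {l l' : List (V × V)} (h : l = l') :
    ∃ (w : Word V l l') (c : CohTerm V (ofAtoms l) (ofAtoms l')),
      (⟦w.toAr⟧ : Mor V _ _) = ⟦c.toAr⟧ := by
  subst h
  exact ⟨Word.refl l, .id _, Word.mk_toAr_refl l⟩

theorem CohTerm.exists_eq_normalForm {A B : Fm V} (c : CohTerm V A B) :
    ∃ w : Word V A.atoms B.atoms, (⟦c.toAr⟧ : Mor V A B) = ⟦normalForm w⟧ := by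
  obtain ⟨w, c', hw⟩ := Word.exists_mk_toAr_eq_of_eq (V := V) c.atoms_eq
  refine ⟨w, ?_⟩
  rw [normalForm, mk_comp, mk_comp, hw]
  exact mk_toAr_eq c (.comp (flatten B).inv (.comp c' (flatten A)))

theorem normalForm_comp {A B C : Fm V} (w₂ : Word V B.atoms C.atoms)
    (w₁ : Word V A.atoms B.atoms) :
    (⟦normalForm w₂⟧ : Mor V _ _) ⬝ ⟦normalForm w₁⟧ = ⟦normalForm (w₂.comp w₁)⟧ := by
  simp only [normalForm, mk_comp, assoc]
  rw [← assoc ⟦(flatten B).toAr⟧, ((flatten B).isInverse_inv).2, id_comp, ← assoc ⟦w₂.toAr⟧,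
    Word.mk_toAr_comp]

theorem normalForm_tens {A₁ B₁ A₂ B₂ : Fm V} (w₁ : Word V A₁.atoms B₁.atoms)
    (w₂ : Word V A₂.atoms B₂.atoms) :
    (⟦normalForm w₁⟧ : Mor V _ _) ⧆ ⟦normalForm w₂⟧ =
      ⟦normalForm (A := A₁.and A₂) (B := B₁.and B₂) (w₁.append w₂)⟧ := by
  have hinv : (⟦(flatten B₁).inv.toAr⟧ : Mor V _ _) ⧆ ⟦(flatten B₂).inv.toAr⟧ =
      ⟦(flatten (B₁.and B₂)).inv.toAr⟧ ⬝ ⟦(merge B₁.atoms B₂.atoms).toAr⟧ :=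
    mk_toAr_eq (.tens (flatten B₁).inv (flatten B₂).inv)
      (.comp (flatten (B₁.and B₂)).inv (merge B₁.atoms B₂.atoms))
  show (⟦(flatten B₁).inv.toAr⟧ ⬝ ⟦w₁.toAr⟧ ⬝ ⟦(flatten A₁).toAr⟧) ⧆
      (⟦(flatten B₂).inv.toAr⟧ ⬝ ⟦w₂.toAr⟧ ⬝ ⟦(flatten A₂).toAr⟧) =
    ⟦(flatten (B₁.and B₂)).inv.toAr⟧ ⬝ ⟦(w₁.append w₂).toAr⟧ ⬝
      ⟦(merge A₁.atoms A₂.atoms).toAr⟧ ⬝ (⟦(flatten A₁).toAr⟧ ⧆ ⟦(flatten A₂).toAr⟧)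
  rw [comp_tens_comp, comp_tens_comp, hinv, assoc, ← assoc ⟦(merge _ _).toAr⟧, merge_natural,
    assoc]

theorem Ar.exists_eq_normalForm : ∀ {A B : Fm V} (f : Ar V A B),
    ∃ w : Word V A.atoms B.atoms, (⟦f⟧ : Mor V A B) = ⟦normalForm w⟧
  | _, _, .id A => (CohTerm.id A).exists_eq_normalForm
  | _, _, .bto A B C => (CohTerm.bto A B C).exists_eq_normalForm
  | _, _, .bfrom A B C => (CohTerm.bfrom A B C).exists_eq_normalForm
  | _, _, .dto A => (CohTerm.dto A).exists_eq_normalForm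
  | _, _, .dfrom A => (CohTerm.dfrom A).exists_eq_normalForm
  | _, _, .sto A => (CohTerm.sto A).exists_eq_normalForm
  | _, _, .sfrom A => (CohTerm.sfrom A).exists_eq_normalForm
  | _, _, .r x => by
      refine ⟨.new x .nil, ?_⟩
      show ⟦Ar.r x⟧ = ⟦Ar.dto _⟧ ⬝ ((⟦Ar.r x⟧ ⧆ ⟦Ar.id .top⟧) ⬝ ⟦Ar.sfrom .top⟧) ⬝ ⟦Ar.id .top⟧
      have hsd : (⟦Ar.sfrom .top⟧ : Mor V _ _) = ⟦Ar.dfrom .top⟧ :=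
        mk_toAr_eq (.sfrom .top) (.dfrom .top)
      rw [comp_id, hsd, dfrom_natural, ← assoc, (IsInverse.dto _).2, id_comp]
  | _, _, .comp g f => by
      obtain ⟨w₁, h₁⟩ := f.exists_eq_normalForm
      obtain ⟨w₂, h₂⟩ := g.exists_eq_normalForm
      exact ⟨w₂.comp w₁, by rw [mk_comp, h₁, h₂, normalForm_comp]⟩
  | _, _, .tens f g => by
      obtain ⟨w₁, h₁⟩ := f.exists_eq_normalForm
      obtain ⟨w₂, h₂⟩ := g.exists_eq_normalForm
      exact ⟨w₁.append w₂, by rw [mk_tens, h₁, h₂, normalForm_tens]⟩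

end NormalForm

theorem CohTerm.exists_toMatch_eq_ofEquiv {A B : Fm V} (c : CohTerm V A B) :
    ∃ e, c.toAr.toMatch = Match.ofEquiv e := by
  induction c with
  | comp g f ihg ihf =>
      obtain ⟨eg, hg⟩ := ihg
      obtain ⟨ef, hf⟩ := ihf
      exact ⟨ef.trans eg, (congrArg₂ Match.comp hf hg).trans (Match.ofEquiv_comp_ofEquiv _ _)⟩
  | tens f g ihf ihg =>
      obtain ⟨ef, hf⟩ := ihf
      obtain ⟨eg, hg⟩ := ihg
      exact ⟨ef.sumCongr eg, (congrArg₂ Match.tens hf hg).trans (Match.ofEquiv_tens_ofEquiv _ _)⟩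
  | _ => exact ⟨_, rfl⟩

theorem Word.toMatch_toAr_injective : ∀ {l₁ l₂ : List (V × V)} (w w' : Word V l₁ l₂),
    w.toAr.toMatch = w'.toAr.toMatch → w = w'
  | _, _, .nil, .nil, _ => rfl
  | _, _, .keep p w, .keep _ w', h =>
      congrArg (Word.keep p) (toMatch_toAr_injective w w' (Match.tens_right_injective _ h))
  | _, _, .new x w, .new _ w', h =>
      congrArg (Word.new x) (toMatch_toAr_injective w w'
        (Match.tens_right_injective _ (Match.ofEquiv_comp_injective _ h)))
  | _, _, .keep _ _, .new _ _, h =>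
      absurd (congrFun (congrArg Match.up h) (.inl true)) Sum.inl_ne_inr
  | _, _, .new _ _, .keep _ _, h =>
      absurd (congrFun (congrArg Match.up h) (.inl true)) Sum.inr_ne_inl

theorem toMatch_normalForm_injective {A B : Fm V} :
    Function.Injective fun w : Word V A.atoms B.atoms => (normalForm w).toMatch := by
  intro w₁ w₂ h
  obtain ⟨eA, hA⟩ := (CohTerm.flatten A).exists_toMatch_eq_ofEquiv
  obtain ⟨eB, hB⟩ := (CohTerm.flatten B).inv.exists_toMatch_eq_ofEquiv
  refine Word.toMatch_toAr_injective w₁ w₂ (Match.ofEquiv_comp_injective eA ?_)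
  refine Match.comp_ofEquiv_injective eB ?_
  simpa only [normalForm, Ar.toMatch, hA, hB] using h

/-- coherence for the category defined like M≤ but lacking the
arrows t_{x,y,z} and all the specific equations of M≤. -/
theorem stmt5 {V : Type} {A B : Fm V} (f g : Ar V A B) (h : GRel f = GRel g) :
    Eqv f g := by
  obtain ⟨w₁, hf⟩ := f.exists_eq_normalForm
  obtain ⟨w₂, hg⟩ := g.exists_eq_normalForm
  have hmatch : f.toMatch = g.toMatch :=
    Match.diagram_injective (by rwa [← GRel_eq_diagram_toMatch, ← GRel_eq_diagram_toMatch])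
  obtain rfl : w₁ = w₂ := toMatch_normalForm_injective <|
    (Quotient.exact hf).toMatch_eq.symm.trans (hmatch.trans (Quotient.exact hg).toMatch_eq)
  exact (Quotient.exact hf).trans (Quotient.exact hg).symm

end DP
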